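/- arXiv:2403.19818 — 5 statements merged into one kernel-verified Lean document; each statement's English description precedes it below -/
import Mathlib

section
/- Let Λ₁, Λ₂ be d×r real matrices of full column rank and set P_I¹ = (1/2)(Λ₁(Λ₁ᵀΛ₁)⁻¹Λ₁ᵀ + I_d). Then the following are equivalent: (a) there exists an invertible r×r matrix Φ with Λ₁ = Λ₂Φ; (b) P_I¹ Λ₂ = Λ₂ and rank(Λ₁ᵀΛ₂) = r. -/
/-!
Since `Λ₁ᵀΛ₁` is invertible, `proj Λ₁` fixes `Λ₁`, so `P_I¹ M = M` says exactly that the columns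
of `M` lie in `col(Λ₁)`, i.e. `M = Λ₁ Ψ` for some `Ψ`. For `M = Λ₂` this gives
`Λ₁ᵀΛ₂ = (Λ₁ᵀΛ₁) Ψ`, which has full rank iff `Ψ` is invertible, and then `Λ₁ = Λ₂ Ψ⁻¹`.
-/

open Matrix

/-- Orthogonal projection onto the column space of `Λ`. -/
noncomputable def proj {d r : ℕ} (Λ : Matrix (Fin d) (Fin r) ℝ) : Matrix (Fin d) (Fin d) ℝ :=
  Λ * (Λᵀ * Λ)⁻¹ * Λᵀ

/-- The transformation `P_I = (1/2)(proj Λ + I)`. -/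
noncomputable def projI {d r : ℕ} (Λ : Matrix (Fin d) (Fin r) ℝ) : Matrix (Fin d) (Fin d) ℝ :=
  (1 / 2 : ℝ) • (proj Λ + 1)

namespace Matrix

theorem isUnit_iff_rank_eq_card {n K : Type*} [Fintype n] [DecidableEq n] [Field K]
    (A : Matrix n n K) : IsUnit A ↔ A.rank = Fintype.card n := by
  refine ⟨rank_of_isUnit A, fun h => mulVec_surjective_iff_isUnit.mp ?_⟩
  have htop : LinearMap.range A.mulVecLin = ⊤ :=
    Submodule.eq_top_of_finrank_eq (by rw [← rank, h, Module.finrank_fintype_fun_eq_card])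
  exact LinearMap.range_eq_top.mp htop

theorem isUnit_transpose_mul_self_of_rank_eq_card {m n K : Type*} [Fintype m] [Fintype n]
    [DecidableEq n] [Field K] [LinearOrder K] [IsStrictOrderedRing K] (A : Matrix m n K)
    (h : A.rank = Fintype.card n) : IsUnit (Aᵀ * A) := by
  rw [isUnit_iff_rank_eq_card, rank_transpose_mul_self, h]

theorem eq_mul_nonsing_inv_of_eq_mul {m n R : Type*} [Fintype n] [DecidableEq n] [CommRing R]
    {A B : Matrix m n R} {Φ : Matrix n n R} (hΦ : IsUnit Φ) (h : A = B * Φ) : B = A * Φ⁻¹ := by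
  rw [h, Matrix.mul_assoc, mul_nonsing_inv _ ((isUnit_iff_isUnit_det _).mp hΦ), Matrix.mul_one]

end Matrix

section Projection

variable {d r : ℕ} {Λ : Matrix (Fin d) (Fin r) ℝ} {n : Type*}

theorem proj_mul_self (h : IsUnit (Λᵀ * Λ)) : proj Λ * Λ = Λ := by
  rw [proj, Matrix.mul_assoc, Matrix.mul_assoc,
    nonsing_inv_mul _ ((isUnit_iff_isUnit_det _).mp h), Matrix.mul_one]

theorem proj_mul_eq_self_iff (h : IsUnit (Λᵀ * Λ)) (M : Matrix (Fin d) n ℝ) :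
    proj Λ * M = M ↔ ∃ Ψ : Matrix (Fin r) n ℝ, M = Λ * Ψ := by
  constructor
  · intro hM
    exact ⟨(Λᵀ * Λ)⁻¹ * Λᵀ * M, by
      conv_lhs => rw [← hM, proj]
      simp only [Matrix.mul_assoc]⟩
  · rintro ⟨Ψ, rfl⟩
    rw [← Matrix.mul_assoc, proj_mul_self h]

theorem projI_mul_eq_self_iff (M : Matrix (Fin d) n ℝ) :
    projI Λ * M = M ↔ proj Λ * M = M := by
  have hsub : projI Λ * M - M = (1 / 2 : ℝ) • (proj Λ * M - M) := by
    rw [projI, Matrix.smul_mul, Matrix.add_mul, Matrix.one_mul]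
    module
  rw [← sub_eq_zero, hsub, smul_eq_zero, sub_eq_zero]
  norm_num

end Projection

theorem null_iff_fixed_and_full_rank_general {d r : ℕ} (Λ₁ Λ₂ : Matrix (Fin d) (Fin r) ℝ)
    (h₁ : Λ₁.rank = r) :
    (∃ Φ : Matrix (Fin r) (Fin r) ℝ, IsUnit Φ ∧ Λ₁ = Λ₂ * Φ) ↔
      (projI Λ₁ * Λ₂ = Λ₂ ∧ (Λ₁ᵀ * Λ₂).rank = r) := by
  have hG : IsUnit (Λ₁ᵀ * Λ₁) :=
    isUnit_transpose_mul_self_of_rank_eq_card Λ₁ (by rw [h₁, Fintype.card_fin])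
  have hrank (A : Matrix (Fin r) (Fin r) ℝ) : A.rank = r ↔ IsUnit A := by
    rw [isUnit_iff_rank_eq_card, Fintype.card_fin]
  rw [projI_mul_eq_self_iff, proj_mul_eq_self_iff hG, hrank]
  constructor
  · rintro ⟨Φ, hΦ, hΛ₁⟩
    have hΛ₂ := eq_mul_nonsing_inv_of_eq_mul hΦ hΛ₁
    refine ⟨⟨Φ⁻¹, hΛ₂⟩, ?_⟩
    rw [hΛ₂, ← Matrix.mul_assoc]
    exact hG.mul (isUnit_nonsing_inv_iff.mpr hΦ)
  · rintro ⟨⟨Ψ, hΛ₂⟩, hU⟩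
    have hΨ : IsUnit Ψ := isUnit_of_mul_isUnit_right (by rwa [hΛ₂, ← Matrix.mul_assoc] at hU)
    exact ⟨Ψ⁻¹, isUnit_nonsing_inv_iff.mpr hΨ, eq_mul_nonsing_inv_of_eq_mul hΨ hΛ₂⟩

theorem null_iff_fixed_and_full_rank {d r : ℕ} (Λ₁ Λ₂ : Matrix (Fin d) (Fin r) ℝ)
    (h₁ : Λ₁.rank = r) (h₂ : Λ₂.rank = r) :
    (∃ Φ : Matrix (Fin r) (Fin r) ℝ, IsUnit Φ ∧ Λ₁ = Λ₂ * Φ) ↔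
      (projI Λ₁ * Λ₂ = Λ₂ ∧ (Λ₁ᵀ * Λ₂).rank = r) :=
  null_iff_fixed_and_full_rank_general Λ₁ Λ₂ h₁
end

section
/- Let Λ₁, Λ₂ be d×r real matrices of full column rank with col(Λ₁) ∩ col(Λ₂) = {0}. Set P_I¹ = (1/2)(Λ₁(Λ₁ᵀΛ₁)⁻¹Λ₁ᵀ + I_d). Then col(P_I¹Λ₂) ∩ col(Λ₂) = {0}, under the additional hypothesis rank(Λ₁ᵀΛ₂) = r. -/
open Matrix

lemma isUnit_of_rank_eq {r : ℕ} (A : Matrix (Fin r) (Fin r) ℝ) (h : A.rank = r) : IsUnit A := by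
  rw [← Matrix.mulVec_surjective_iff_isUnit]
  have hr : LinearMap.range A.mulVecLin = ⊤ := by
    apply Submodule.eq_top_of_finrank_eq
    simpa [Module.finrank_fintype_fun_eq_card, Matrix.rank] using h
  intro y
  obtain ⟨x, hx⟩ := hr ▸ Submodule.mem_top (x := y) (R := ℝ)
  exact ⟨x, hx⟩

theorem col_projI_inf_col_eq_bot {d r : ℕ} (Λ₁ Λ₂ : Matrix (Fin d) (Fin r) ℝ)
    (h₁ : Λ₁.rank = r) (h₂ : Λ₂.rank = r)
    (hcol : LinearMap.range Λ₁.mulVecLin ⊓ LinearMap.range Λ₂.mulVecLin = ⊥)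
    (hrank : (Λ₁ᵀ * Λ₂).rank = r) :
    LinearMap.range (projI Λ₁ * Λ₂).mulVecLin ⊓ LinearMap.range Λ₂.mulVecLin = ⊥ := by
  have hG : IsUnit (Λ₁ᵀ * Λ₁) :=
    isUnit_of_rank_eq _ (by rw [Matrix.rank_transpose_mul_self, h₁])
  have hM : IsUnit (Λ₁ᵀ * Λ₂) := isUnit_of_rank_eq _ hrank
  rw [Submodule.eq_bot_iff]
  rintro x ⟨⟨v, hv⟩, hx2⟩
  rw [Matrix.mulVecLin_apply] at hv
  -- expand projI
  have hexp : (projI Λ₁ * Λ₂).mulVec v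
      = (1 / 2 : ℝ) • ((proj Λ₁ * Λ₂).mulVec v + Λ₂.mulVec v) := by
    simp [projI, Matrix.smul_mul, Matrix.add_mul, Matrix.smul_mulVec,
      Matrix.add_mulVec]
  -- the projected part lies in col Λ₁
  have hmem1 : (proj Λ₁ * Λ₂).mulVec v ∈ LinearMap.range Λ₁.mulVecLin := by
    refine ⟨((Λ₁ᵀ * Λ₁)⁻¹ * Λ₁ᵀ * Λ₂).mulVec v, ?_⟩
    simp [proj, Matrix.mulVecLin_apply, ← Matrix.mulVec_mulVec, Matrix.mul_assoc]
  -- it also lies in col Λ₂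
  have hmem2 : (proj Λ₁ * Λ₂).mulVec v ∈ LinearMap.range Λ₂.mulVecLin := by
    have hx2' : ((2 : ℝ) • x - Λ₂.mulVec v) ∈ LinearMap.range Λ₂.mulVecLin := by
      refine Submodule.sub_mem _ (Submodule.smul_mem _ _ hx2) ⟨v, rfl⟩
    have : (proj Λ₁ * Λ₂).mulVec v = (2 : ℝ) • x - Λ₂.mulVec v := by
      rw [← hv, hexp]
      rw [smul_smul]
      norm_num
    rwa [this]
  have hzero : (proj Λ₁ * Λ₂).mulVec v = 0 := by
    have := hcol ▸ Submodule.mem_inf.mpr ⟨hmem1, hmem2⟩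
    simpa using this
  -- deduce v = 0
  have hstep : Λ₁.mulVec (((Λ₁ᵀ * Λ₁)⁻¹ * Λ₁ᵀ * Λ₂).mulVec v) = 0 := by
    rw [Matrix.mulVec_mulVec,
      show Λ₁ * ((Λ₁ᵀ * Λ₁)⁻¹ * Λ₁ᵀ * Λ₂) = proj Λ₁ * Λ₂ by simp [proj, Matrix.mul_assoc]]
    exact hzero
  have hstep2 : (Λ₁ᵀ * Λ₁).mulVec (((Λ₁ᵀ * Λ₁)⁻¹ * Λ₁ᵀ * Λ₂).mulVec v) = 0 := by
    rw [← Matrix.mulVec_mulVec, hstep, Matrix.mulVec_zero]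
  have h3 : ((Λ₁ᵀ * Λ₁)⁻¹ * Λ₁ᵀ * Λ₂).mulVec v = 0 :=
    ((Matrix.mulVec_injective_iff_isUnit.mpr hG).eq_iff' (Matrix.mulVec_zero _)).mp hstep2
  have h4 : (Λ₁ᵀ * Λ₂).mulVec v = 0 := by
    have := congrArg (fun y => (Λ₁ᵀ * Λ₁).mulVec y) h3
    simpa [Matrix.mulVec_mulVec, ← Matrix.mul_assoc,
      Matrix.mul_nonsing_inv _ (hG.map Matrix.detMonoidHom : IsUnit (Λ₁ᵀ * Λ₁).det)] using this
  have hv0 : v = 0 :=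
    (Matrix.mulVec_injective_iff_isUnit.mpr hM).eq_iff'
      (Matrix.mulVec_zero _) |>.mp h4
  rw [← hv, hv0, Matrix.mulVec_zero]
end

section
/- Let Λ₁, Λ₂ be d×r real matrices of full column rank with col(Λ₁) ∩ col(Λ₂) = {0}, and suppose 0 < rank(Λ₁ᵀΛ₂) < r. Set P_I¹ = (1/2)(Λ₁(Λ₁ᵀΛ₁)⁻¹Λ₁ᵀ + I_d). Then there is no invertible r×r matrix Φ with P_I¹Λ₂ = Λ₂Φ; i.e., col(P_I¹Λ₂) ≠ col(Λ₂). -/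
open Matrix

theorem no_rotation_of_partial_rank {d r : ℕ} (Λ₁ Λ₂ : Matrix (Fin d) (Fin r) ℝ)
    (h₁ : Λ₁.rank = r) (h₂ : Λ₂.rank = r)
    (hcol : LinearMap.range Λ₁.mulVecLin ⊓ LinearMap.range Λ₂.mulVecLin = ⊥)
    (hs0 : 0 < (Λ₁ᵀ * Λ₂).rank) (hsr : (Λ₁ᵀ * Λ₂).rank < r) :
    ¬ ∃ Φ : Matrix (Fin r) (Fin r) ℝ, IsUnit Φ ∧ projI Λ₁ * Λ₂ = Λ₂ * Φ := by
  rintro ⟨Φ, hΦ, hEq⟩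
  -- Λ₁ᵀ * Λ₁ is a unit
  have hker : LinearMap.ker Λ₁.mulVecLin = ⊥ := by
    have hrn := LinearMap.finrank_range_add_finrank_ker Λ₁.mulVecLin
    have hdom : Module.finrank ℝ (Fin r → ℝ) = r := by simp
    rw [hdom] at hrn
    have hrk : Module.finrank ℝ (LinearMap.range Λ₁.mulVecLin) = r := h₁
    rw [hrk] at hrn
    have : Module.finrank ℝ (LinearMap.ker Λ₁.mulVecLin) = 0 := by omega
    exact Submodule.finrank_eq_zero.mp this
  have hBker : LinearMap.ker (Λ₁ᵀ * Λ₁).mulVecLin = ⊥ := by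
    rw [Matrix.ker_mulVecLin_transpose_mul_self]; exact hker
  have hBunit : IsUnit (Λ₁ᵀ * Λ₁) := by
    rw [← Matrix.mulVec_injective_iff_isUnit]
    have := LinearMap.ker_eq_bot.mp hBker
    exact this
  have hBdet : IsUnit (Λ₁ᵀ * Λ₁).det := (Matrix.isUnit_iff_isUnit_det _).mp hBunit
  -- proj Λ₁ * Λ₂ = Λ₂ * ((2:ℝ)•Φ - 1)
  have h2 : proj Λ₁ * Λ₂ + Λ₂ = (2 : ℝ) • (Λ₂ * Φ) := by
    have h := congrArg (fun M => (2 : ℝ) • M) hEq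
    simp only [projI, Matrix.smul_mul, Matrix.add_mul, Matrix.one_mul, smul_smul] at h
    norm_num at h
    exact h
  have hP : proj Λ₁ * Λ₂ = Λ₂ * ((2 : ℝ) • Φ - 1) := by
    rw [Matrix.mul_sub, Matrix.mul_one, Matrix.mul_smul]
    exact eq_sub_of_add_eq h2
  -- each column of proj Λ₁ * Λ₂ is in both column spaces, hence zero
  have hzero : proj Λ₁ * Λ₂ = 0 := by
    ext i j
    have hcolj : (proj Λ₁ * Λ₂) *ᵥ Pi.single j 1 = 0 := by
      have hmem1 : (proj Λ₁ * Λ₂) *ᵥ Pi.single j 1 ∈ LinearMap.range Λ₁.mulVecLin := by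
        refine ⟨((Λ₁ᵀ * Λ₁)⁻¹ * Λ₁ᵀ * Λ₂) *ᵥ Pi.single j 1, ?_⟩
        rw [Matrix.mulVecLin_apply, Matrix.mulVec_mulVec]
        congr 1
        simp [proj, Matrix.mul_assoc]
      have hmem2 : (proj Λ₁ * Λ₂) *ᵥ Pi.single j 1 ∈ LinearMap.range Λ₂.mulVecLin := by
        refine ⟨((2 : ℝ) • Φ - 1) *ᵥ Pi.single j 1, ?_⟩
        rw [Matrix.mulVecLin_apply, Matrix.mulVec_mulVec, ← hP]
      have : (proj Λ₁ * Λ₂) *ᵥ Pi.single j 1 ∈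
          LinearMap.range Λ₁.mulVecLin ⊓ LinearMap.range Λ₂.mulVecLin := ⟨hmem1, hmem2⟩
      rw [hcol] at this
      simpa using this
    have := congrFun hcolj i
    simpa using this
  -- conclude Λ₁ᵀ * Λ₂ = 0, contradicting hs0
  have hfin : Λ₁ᵀ * Λ₂ = 0 := by
    have h := congrArg (fun M => Λ₁ᵀ * M) hzero
    simp only [Matrix.mul_zero] at h
    rw [show Λ₁ᵀ * (proj Λ₁ * Λ₂) = (Λ₁ᵀ * Λ₁) * (Λ₁ᵀ * Λ₁)⁻¹ * (Λ₁ᵀ * Λ₂) by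
      simp [proj, Matrix.mul_assoc]] at h
    rwa [Matrix.mul_nonsing_inv _ hBdet, Matrix.one_mul] at h
  rw [hfin, Matrix.rank_zero] at hs0
  exact lt_irrefl 0 hs0
end

section
/- Let Λ₁, Λ₂ be d×r real matrices of full column rank, and suppose Λ₂ = (Λ₁Φ, Π₂) where Φ ∈ ℝ^{r×r₁}, Π₂ ∈ ℝ^{d×r₂} with r = r₁ + r₂, and col(Λ₁) ∩ col(Π₂) = {0}, rank(Λ₁ᵀΠ₂) = r₂. Let P_I¹ = (1/2)(Λ₁(Λ₁ᵀΛ₁)⁻¹Λ₁ᵀ + I_d). Then col(P_I¹Π₂) ∩ col(Π₂) = {0}. -/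
open Matrix

lemma ker_bot_of_rank {d n : ℕ} (A : Matrix (Fin d) (Fin n) ℝ) (h : A.rank = n) :
    ∀ v, A *ᵥ v = 0 → v = 0 := by
  rw [← Matrix.ker_mulVecLin_eq_bot_iff]
  have h2 := A.mulVecLin.finrank_range_add_finrank_ker
  rw [Matrix.rank] at h
  simp only [Module.finrank_fintype_fun_eq_card, Fintype.card_fin, h, add_eq_left] at h2
  exact Submodule.finrank_eq_zero.mp h2

theorem trivial_intersection_block_case {d r r₁ r₂ : ℕ} (hr : r = r₁ + r₂)
    (Λ₁ : Matrix (Fin d) (Fin r) ℝ)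
    (Λ₂ : Matrix (Fin d) (Fin r₁ ⊕ Fin r₂) ℝ)
    (Φ : Matrix (Fin r) (Fin r₁) ℝ)
    (Pi₂ : Matrix (Fin d) (Fin r₂) ℝ)
    (h₁ : Λ₁.rank = r) (h₂ : Λ₂.rank = r)
    (hblock : Λ₂ = Matrix.fromCols (Λ₁ * Φ) Pi₂)
    (hcol : LinearMap.range Λ₁.mulVecLin ⊓ LinearMap.range Pi₂.mulVecLin = ⊥)
    (hrank : (Λ₁ᵀ * Pi₂).rank = r₂) :
    LinearMap.range (projI Λ₁ * Pi₂).mulVecLin ⊓ LinearMap.range Pi₂.mulVecLin = ⊥ := by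
  -- injectivity facts
  have hinj₁ : ∀ v, Λ₁ *ᵥ v = 0 → v = 0 := ker_bot_of_rank Λ₁ h₁
  have hinj₃ : ∀ v, (Λ₁ᵀ * Pi₂) *ᵥ v = 0 → v = 0 := ker_bot_of_rank _ hrank
  -- Λ₁ᵀ * Λ₁ is a unit
  have hG : (Λ₁ᵀ * Λ₁).rank = r := by rw [Matrix.rank_transpose_mul_self, h₁]
  have hGinj := ker_bot_of_rank _ hG
  have hGunit : IsUnit (Λ₁ᵀ * Λ₁) := by
    rw [← Matrix.mulVec_injective_iff_isUnit]
    intro a b hab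
    have : (Λ₁ᵀ * Λ₁) *ᵥ (a - b) = 0 := by
      rw [Matrix.mulVec_sub, hab, sub_self]
    exact sub_eq_zero.mp (hGinj _ this)
  have hdet : IsUnit (Λ₁ᵀ * Λ₁).det := (Matrix.isUnit_iff_isUnit_det _).mp hGunit
  rw [Submodule.eq_bot_iff]
  rintro v ⟨⟨x, hx⟩, y, hy⟩
  simp only [Matrix.mulVecLin_apply] at hx hy
  set p := Pi₂ *ᵥ x with hp
  have hv : v = (1/2 : ℝ) • (proj Λ₁ *ᵥ p + p) := by
    rw [← hx, projI, Matrix.smul_mul, Matrix.smul_mulVec, Matrix.add_mul,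
      Matrix.one_mul, Matrix.add_mulVec, ← Matrix.mulVec_mulVec]
  have hw1 : proj Λ₁ *ᵥ p ∈ LinearMap.range Λ₁.mulVecLin := by
    refine ⟨(Λ₁ᵀ * Λ₁)⁻¹ *ᵥ (Λ₁ᵀ *ᵥ p), ?_⟩
    simp [proj, Matrix.mulVecLin_apply, Matrix.mulVec_mulVec, Matrix.mul_assoc]
  have hw2 : proj Λ₁ *ᵥ p ∈ LinearMap.range Pi₂.mulVecLin := by
    refine ⟨(2 : ℝ) • y - x, ?_⟩
    rw [Matrix.mulVecLin_apply, Matrix.mulVec_sub, Matrix.mulVec_smul, hy, hv, smul_smul]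
    norm_num
    rw [← hp, add_sub_cancel_right]
  have hw0 : proj Λ₁ *ᵥ p = 0 := by
    have hmem : proj Λ₁ *ᵥ p ∈ (⊥ : Submodule ℝ (Fin d → ℝ)) := by
      rw [← hcol]; exact ⟨hw1, hw2⟩
    simpa using hmem
  have hu : Λ₁ *ᵥ ((Λ₁ᵀ * Λ₁)⁻¹ *ᵥ (Λ₁ᵀ *ᵥ p)) = 0 := by
    simpa [proj, Matrix.mulVec_mulVec, Matrix.mul_assoc] using hw0
  have hu0 := hinj₁ _ hu
  have hΛp : Λ₁ᵀ *ᵥ p = 0 := by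
    have h5 := congrArg ((Λ₁ᵀ * Λ₁) *ᵥ ·) hu0
    simpa [Matrix.mulVec_mulVec, ← Matrix.mul_assoc, Matrix.mul_nonsing_inv _ hdet] using h5
  have hx0 : x = 0 := hinj₃ x (by rw [← Matrix.mulVec_mulVec]; exact hΛp)
  rw [hv, hw0, hp, hx0]
  simp
end

section
/- For any real block matrix M = [[A, C], [Cᵀ, B]] with A, B square symmetric blocks and C a compatible rectangular block, the squared spectral norm satisfies ‖M‖² ≤ ‖A‖² + ‖B‖² + 2‖C‖². -/
open Matrix

/-- Spectral (L2 operator) norm of a matrix. -/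
noncomputable def specNorm {m n : Type*} [Fintype m] [Fintype n] [DecidableEq n]
    (A : Matrix m n ℝ) : ℝ :=
  ‖LinearMap.toContinuousLinearMap (Matrix.toEuclideanLin A)‖

lemma euclid_sq_split {α β : Type*} [Fintype α] [Fintype β] (p : α → ℝ) (q : β → ℝ) :
    ‖(WithLp.equiv 2 ((α ⊕ β) → ℝ)).symm (Sum.elim p q)‖ ^ 2 =
      ‖(WithLp.equiv 2 (α → ℝ)).symm p‖ ^ 2 + ‖(WithLp.equiv 2 (β → ℝ)).symm q‖ ^ 2 := by
  rw [EuclideanSpace.norm_eq, EuclideanSpace.norm_eq, EuclideanSpace.norm_eq,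
    Real.sq_sqrt (by positivity), Real.sq_sqrt (by positivity), Real.sq_sqrt (by positivity),
    Fintype.sum_sum_type]
  simp

open scoped Matrix.Norms.L2Operator in
lemma specNorm_transpose {α β : Type*} [Fintype α] [Fintype β] [DecidableEq α] [DecidableEq β]
    (C : Matrix α β ℝ) : specNorm Cᵀ = specNorm C := by
  have h1 : specNorm Cᵀ = ‖Cᵀ‖ := rfl
  have h2 : specNorm C = ‖C‖ := rfl
  rw [h1, h2, ← Matrix.conjTranspose_eq_transpose_of_trivial,
    Matrix.l2_opNorm_conjTranspose]

lemma specNorm_mulVec_le {m n : Type*} [Fintype m] [Fintype n] [DecidableEq n]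
    (A : Matrix m n ℝ) (x : n → ℝ) :
    ‖(WithLp.equiv 2 (m → ℝ)).symm (A *ᵥ x)‖ ≤
      specNorm A * ‖(WithLp.equiv 2 (n → ℝ)).symm x‖ := by
  have := (LinearMap.toContinuousLinearMap (Matrix.toEuclideanLin A)).le_opNorm
    ((WithLp.equiv 2 (n → ℝ)).symm x)
  simpa [LinearMap.coe_toContinuousLinearMap', specNorm] using this

theorem specNorm_sq_fromBlocks_le {m n : ℕ}
    (A : Matrix (Fin m) (Fin m) ℝ) (B : Matrix (Fin n) (Fin n) ℝ)
    (C : Matrix (Fin m) (Fin n) ℝ) (hA : Aᵀ = A) (hB : Bᵀ = B) :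
    specNorm (Matrix.fromBlocks A C Cᵀ B) ^ 2 ≤
      specNorm A ^ 2 + specNorm B ^ 2 + 2 * specNorm C ^ 2 := by
  set a := specNorm A with ha
  set b := specNorm B with hb
  set c := specNorm C with hc
  have ha0 : 0 ≤ a := norm_nonneg _
  have hb0 : 0 ≤ b := norm_nonneg _
  have hc0 : 0 ≤ c := norm_nonneg _
  have hct : specNorm Cᵀ = c := specNorm_transpose C
  have hS : 0 ≤ a ^ 2 + b ^ 2 + 2 * c ^ 2 := by positivity
  set K := Real.sqrt (a ^ 2 + b ^ 2 + 2 * c ^ 2) with hK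
  have hK0 : 0 ≤ K := Real.sqrt_nonneg _
  have hKsq : K ^ 2 = a ^ 2 + b ^ 2 + 2 * c ^ 2 := Real.sq_sqrt hS
  have hmain : specNorm (Matrix.fromBlocks A C Cᵀ B) ≤ K := by
    apply ContinuousLinearMap.opNorm_le_bound _ hK0
    intro v
    set vx : Fin m → ℝ := fun i => WithLp.equiv 2 _ v (Sum.inl i) with hvx
    set vy : Fin n → ℝ := fun j => WithLp.equiv 2 _ v (Sum.inr j) with hvy
    have hv : v = (WithLp.equiv 2 ((Fin m ⊕ Fin n) → ℝ)).symm (Sum.elim vx vy) := by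
      apply (WithLp.equiv 2 _).injective
      funext s
      cases s <;> simp [hvx, hvy]
    have happ : LinearMap.toContinuousLinearMap
        (Matrix.toEuclideanLin (Matrix.fromBlocks A C Cᵀ B)) v =
        (WithLp.equiv 2 ((Fin m ⊕ Fin n) → ℝ)).symm
          (Sum.elim (A *ᵥ vx + C *ᵥ vy) (Cᵀ *ᵥ vx + B *ᵥ vy)) := by
      rw [hv]
      simp only [LinearMap.coe_toContinuousLinearMap',
        WithLp.equiv_symm_apply, Matrix.toEuclideanLin_apply_piLp_toLp, Matrix.fromBlocks_mulVec,
        Sum.elim_comp_inl, Sum.elim_comp_inr]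
    set x : EuclideanSpace ℝ (Fin m) := (WithLp.equiv 2 (Fin m → ℝ)).symm vx with hx
    set y : EuclideanSpace ℝ (Fin n) := (WithLp.equiv 2 (Fin n → ℝ)).symm vy with hy
    have hvnorm : ‖v‖ ^ 2 = ‖x‖ ^ 2 + ‖y‖ ^ 2 := by
      rw [hv]; exact euclid_sq_split vx vy
    have h1 : ‖(WithLp.equiv 2 (Fin m → ℝ)).symm (A *ᵥ vx + C *ᵥ vy)‖ ≤ a * ‖x‖ + c * ‖y‖ := by
      have : (WithLp.equiv 2 (Fin m → ℝ)).symm (A *ᵥ vx + C *ᵥ vy)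
          = (WithLp.equiv 2 (Fin m → ℝ)).symm (A *ᵥ vx)
            + (WithLp.equiv 2 (Fin m → ℝ)).symm (C *ᵥ vy) := rfl
      rw [this]
      exact le_trans (norm_add_le _ _)
        (add_le_add (specNorm_mulVec_le A vx) (specNorm_mulVec_le C vy))
    have h2 : ‖(WithLp.equiv 2 (Fin n → ℝ)).symm (Cᵀ *ᵥ vx + B *ᵥ vy)‖ ≤ c * ‖x‖ + b * ‖y‖ := by
      have : (WithLp.equiv 2 (Fin n → ℝ)).symm (Cᵀ *ᵥ vx + B *ᵥ vy)
          = (WithLp.equiv 2 (Fin n → ℝ)).symm (Cᵀ *ᵥ vx)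
            + (WithLp.equiv 2 (Fin n → ℝ)).symm (B *ᵥ vy) := rfl
      rw [this]
      refine le_trans (norm_add_le _ _) (add_le_add ?_ (specNorm_mulVec_le B vy))
      have := specNorm_mulVec_le Cᵀ vx
      rwa [hct] at this
    set w := LinearMap.toContinuousLinearMap
      (Matrix.toEuclideanLin (Matrix.fromBlocks A C Cᵀ B)) v with hw
    have hsq : ‖w‖ ^ 2 ≤ (K * ‖v‖) ^ 2 := by
      rw [happ, euclid_sq_split (A *ᵥ vx + C *ᵥ vy) (Cᵀ *ᵥ vx + B *ᵥ vy)]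
      have hx0 : 0 ≤ ‖x‖ := norm_nonneg _
      have hy0 : 0 ≤ ‖y‖ := norm_nonneg _
      have e1 := pow_le_pow_left₀ (norm_nonneg _) h1 2
      have e2 := pow_le_pow_left₀ (norm_nonneg _) h2 2
      have : (K * ‖v‖) ^ 2 = (a ^ 2 + b ^ 2 + 2 * c ^ 2) * (‖x‖ ^ 2 + ‖y‖ ^ 2) := by
        rw [mul_pow, hKsq, hvnorm]
      rw [this]
      nlinarith [sq_nonneg (a * ‖y‖ - c * ‖x‖), sq_nonneg (c * ‖y‖ - b * ‖x‖)]
    calc ‖w‖ = Real.sqrt (‖w‖ ^ 2) := (Real.sqrt_sq (norm_nonneg _)).symm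
      _ ≤ Real.sqrt ((K * ‖v‖) ^ 2) := Real.sqrt_le_sqrt hsq
      _ = K * ‖v‖ := Real.sqrt_sq (by positivity)
  calc specNorm (Matrix.fromBlocks A C Cᵀ B) ^ 2 ≤ K ^ 2 :=
        pow_le_pow_left₀ (norm_nonneg _) hmain 2
    _ = a ^ 2 + b ^ 2 + 2 * c ^ 2 := hKsq
end
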